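/- Equip Fin r → ℂ with the sup norm and M_r(ℂ) with the operator norm. Let ℓ : (Fin r → ℂ) → M_r(ℂ) be a ℂ-linear map with ‖ℓ(x)‖ = ‖x‖ for all x, and set cᵢ := ℓ(εᵢ), where εᵢ is the i-th standard basis vector. Then each cᵢ satisfies cᵢ cᵢᴴ cᵢ = cᵢ and has matrix rank 1, and for i ≠ j one has cᵢ cⱼᴴ = 0 and cᵢᴴ cⱼ = 0. -/

import Mathlib

open Matrix
open scoped Matrix.Norms.L2Operator

/-!
View each `cᵢ` as an operator `Tᵢ` on `ℓ²(Fin r)`. As `‖εᵢ ± εⱼ‖ = 1` in the sup norm, `ℓ`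
gives `‖Tᵢ‖ = 1` and `‖Tᵢ ± Tⱼ‖ ≤ 1`. Pick unit vectors `ξᵢ` with `‖Tᵢ ξᵢ‖ = 1` and put
`ηᵢ = Tᵢ ξᵢ`. The parallelogram law applied to `Tᵢ ξᵢ ± Tⱼ ξᵢ` forces `Tⱼ ξᵢ = 0` for `j ≠ i`,
equality in Cauchy–Schwarz gives `Tᵢ* ηᵢ = ξᵢ`, and the same argument for the adjoints gives
`Tⱼ* ηᵢ = 0`. Hence `(ξᵢ)` and `(ηᵢ)` are orthonormal; there are `r` of them, so the `ξᵢ` form a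
basis, on which `Tᵢ` agrees with the rank-one operator `ηᵢ ⟨ξᵢ, ·⟩`. The Jordan frame identities
are then identities between rank-one operators attached to orthonormal vectors.
-/

open ContinuousLinearMap InnerProductSpace Module
open scoped InnerProductSpace

variable {𝕜 E F ι : Type*} [RCLike 𝕜]

theorem Pi.norm_single_add_single_le [Fintype ι] [DecidableEq ι] [SeminormedAddCommGroup F]
    {i j : ι} (hij : i ≠ j) (a b : F) :
    ‖(Pi.single i a + Pi.single j b : ι → F)‖ ≤ max ‖a‖ ‖b‖ := by
  refine (pi_norm_le_iff_of_nonneg (by positivity)).mpr fun k => ?_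
  obtain rfl | hki := eq_or_ne k i
  · simp [hij.symm]
  · obtain rfl | hkj := eq_or_ne k j <;> simp [*]

theorem ContinuousLinearMap.exists_norm_eq_one_and_norm_apply_eq_opNorm
    [NormedAddCommGroup E] [NormedSpace 𝕜 E] [ProperSpace E] [Nontrivial E]
    [SeminormedAddCommGroup F] [NormedSpace 𝕜 F] (f : E →L[𝕜] F) :
    ∃ x : E, ‖x‖ = 1 ∧ ‖f x‖ = ‖f‖ := by
  obtain ⟨x, hx, hsup⟩ := (isCompact_sphere (0 : E) 1).exists_sSup_image_eq
    (Set.nonempty_coe_sort.mp (NormedSpace.sphere_nonempty_rclike 𝕜 zero_le_one))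
    (f := fun x => ‖f x‖) (by fun_prop)
  exact ⟨x, mem_sphere_zero_iff_norm.mp hx, hsup.symm.trans f.sSup_sphere_eq_norm⟩

variable (𝕜) in
theorem eq_zero_of_norm_add_le_of_norm_sub_le [NormedAddCommGroup F] [InnerProductSpace 𝕜 F]
    {u v : F} (h₁ : ‖u + v‖ ≤ ‖u‖) (h₂ : ‖u - v‖ ≤ ‖u‖) : v = 0 := by
  have := parallelogram_law_with_norm 𝕜 u v
  exact norm_eq_zero.mp (by nlinarith [norm_nonneg v, norm_nonneg (u + v), norm_nonneg (u - v)])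

section Operators

variable [NormedAddCommGroup E] [InnerProductSpace 𝕜 E] [NormedAddCommGroup F]
  [InnerProductSpace 𝕜 F]

theorem ContinuousLinearMap.apply_eq_zero_of_norm_add_le_of_norm_sub_le {a b : E →L[𝕜] F}
    (h₁ : ‖a + b‖ ≤ 1) (h₂ : ‖a - b‖ ≤ 1) {x : E} (hx : ‖a x‖ = ‖x‖) : b x = 0 := by
  refine eq_zero_of_norm_add_le_of_norm_sub_le 𝕜 (u := a x) ?_ ?_ <;> rw [hx]
  · simpa using (a + b).le_of_opNorm_le h₁ x
  · simpa using (a - b).le_of_opNorm_le h₂ x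

variable [CompleteSpace E] [CompleteSpace F]

/-- Equality case of Cauchy–Schwarz: `⟪a† a x, x⟫ = ‖x‖²` while `‖a† a x‖ ≤ ‖x‖`. -/
theorem ContinuousLinearMap.adjoint_apply_apply_eq_self {a : E →L[𝕜] F} (ha : ‖a‖ ≤ 1)
    {x : E} (hx : ‖a x‖ = ‖x‖) : adjoint a (a x) = x := by
  set u := adjoint a (a x)
  have hu : ‖u‖ ≤ ‖x‖ := by
    simpa [hx] using (adjoint a).le_of_opNorm_le ((adjoint.norm_map a).trans_le ha) (a x)
  have hre : RCLike.re ⟪u, x⟫_𝕜 = ‖x‖ ^ 2 := by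
    rw [adjoint_inner_left, inner_self_eq_norm_sq, hx]
  have : ‖u - x‖ ^ 2 ≤ 0 := by
    rw [@norm_sub_sq 𝕜, hre]
    nlinarith [norm_nonneg u]
  exact sub_eq_zero.mp (norm_eq_zero.mp (by nlinarith [norm_nonneg (u - x)]))

end Operators

section Frame

variable [NormedAddCommGroup E] [InnerProductSpace 𝕜 E] [CompleteSpace E]
  {T : ι → E →L[𝕜] E}

theorem orthonormal_of_pairwise_norm_add_le (hT : ∀ i, ‖T i‖ ≤ 1)
    (hT_pm : Pairwise fun i j => ‖T i + T j‖ ≤ 1 ∧ ‖T i - T j‖ ≤ 1)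
    {ξ : ι → E} (hξ : ∀ i, ‖ξ i‖ = 1) (hTξ : ∀ i, ‖T i (ξ i)‖ = 1) :
    Orthonormal 𝕜 ξ ∧ Orthonormal 𝕜 (fun i => T i (ξ i)) := by
  have hTξ' : ∀ i, ‖T i (ξ i)‖ = ‖ξ i‖ := fun i => (hTξ i).trans (hξ i).symm
  have hback : ∀ i, adjoint (T i) (T i (ξ i)) = ξ i := fun i =>
    (T i).adjoint_apply_apply_eq_self (hT i) (hTξ' i)
  have hkill : ∀ {i j}, i ≠ j → T i (ξ j) = 0 := fun hij =>
    (T _).apply_eq_zero_of_norm_add_le_of_norm_sub_le (hT_pm hij.symm).1 (hT_pm hij.symm).2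
      (hTξ' _)
  have hkill_adjoint : ∀ {i j}, i ≠ j → adjoint (T i) (T j (ξ j)) = 0 := fun {i j} hij => by
    refine (adjoint (T j)).apply_eq_zero_of_norm_add_le_of_norm_sub_le ?_ ?_
      (by rw [hback, hTξ'])
    · simpa only [← map_add, adjoint.norm_map] using (hT_pm hij.symm).1
    · simpa only [← map_sub, adjoint.norm_map] using (hT_pm hij.symm).2
  refine ⟨⟨hξ, fun i j hij => ?_⟩, ⟨hTξ, fun i j hij => ?_⟩⟩
  · show ⟪ξ i, ξ j⟫_𝕜 = 0
    rw [← hback i, adjoint_inner_left, hkill hij, inner_zero_right]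
  · show ⟪T i (ξ i), T j (ξ j)⟫_𝕜 = 0
    rw [← adjoint_inner_right, hkill_adjoint hij, inner_zero_right]

theorem exists_orthonormal_eq_rankOne_of_pairwise_norm_add_le [FiniteDimensional 𝕜 E]
    [Fintype ι] (hcard : Fintype.card ι = finrank 𝕜 E) (hT : ∀ i, ‖T i‖ = 1)
    (hT_pm : Pairwise fun i j => ‖T i + T j‖ ≤ 1 ∧ ‖T i - T j‖ ≤ 1) :
    ∃ ξ η : ι → E, Orthonormal 𝕜 ξ ∧ Orthonormal 𝕜 η ∧ ∀ i, T i = rankOne 𝕜 (η i) (ξ i) := by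
  have hnorming : ∀ i, ∃ x : E, ‖x‖ = 1 ∧ ‖T i x‖ = 1 := fun i => by
    have := FiniteDimensional.proper_rclike 𝕜 E
    have : Nontrivial E := nontrivial_of_finrank_pos (hcard ▸ Fintype.card_pos_iff.mpr ⟨i⟩)
    simpa only [hT i] using (T i).exists_norm_eq_one_and_norm_apply_eq_opNorm
  choose ξ hξ hTξ using hnorming
  obtain ⟨hξ_on, hη_on⟩ := orthonormal_of_pairwise_norm_add_le (fun i => (hT i).le) hT_pm hξ hTξ
  have hspan := hξ_on.linearIndependent.span_eq_top_of_card_eq_finrank' hcard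
  refine ⟨ξ, fun i => T i (ξ i), hξ_on, hη_on, fun i =>
    coe_injective (LinearMap.ext_on_range hspan fun k => ?_)⟩
  obtain rfl | hki := eq_or_ne k i
  · simp [inner_self_eq_norm_sq_to_K, hξ]
  · rw [coe_coe, coe_coe, rankOne_apply, hξ_on.2 hki.symm, zero_smul]
    exact (T k).apply_eq_zero_of_norm_add_le_of_norm_sub_le (hT_pm hki).1 (hT_pm hki).2
      ((hTξ k).trans (hξ k).symm)

end Frame

section RankOne

variable [NormedAddCommGroup E] [InnerProductSpace 𝕜 E] [CompleteSpace E] {x y x' y' : E}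

theorem rankOne_mul_adjoint_mul_rankOne_self (hx : ‖x‖ = 1) (hy : ‖y‖ = 1) :
    rankOne 𝕜 x y * adjoint (rankOne 𝕜 x y) * rankOne 𝕜 x y = rankOne 𝕜 x y := by
  simp [mul_def, rankOne_comp_rankOne, inner_self_eq_norm_sq_to_K, hx, hy]

theorem rankOne_mul_adjoint_rankOne_eq_zero (h : ⟪y, y'⟫_𝕜 = 0) :
    rankOne 𝕜 x y * adjoint (rankOne 𝕜 x' y') = 0 := by
  simp [mul_def, rankOne_comp_rankOne, h]

theorem adjoint_rankOne_mul_rankOne_eq_zero (h : ⟪x, x'⟫_𝕜 = 0) :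
    adjoint (rankOne 𝕜 x y) * rankOne 𝕜 x' y' = 0 := by
  simp [mul_def, rankOne_comp_rankOne, h]

end RankOne

namespace Matrix

variable {m n : Type*} [Fintype m] [Fintype n]

/-- Jordan frame for the triple product `{a,b,c} = ½(a bᴴ c + c bᴴ a)`, in which the primitive
tripotents are those of rank one. -/
def IsJordanFrame (c : ι → Matrix m n 𝕜) : Prop :=
  (∀ i, c i * (c i)ᴴ * c i = c i) ∧
  (∀ i, (c i).rank = 1) ∧
  (∀ i j, i ≠ j → c i * (c j)ᴴ = 0 ∧ (c i)ᴴ * c j = 0)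

variable [DecidableEq n]

theorem rank_eq_one_of_toEuclideanCLM_eq_rankOne {A : Matrix n n 𝕜} {x y : EuclideanSpace 𝕜 n}
    (hx : x ≠ 0) (hy : y ≠ 0) (hA : toEuclideanCLM (𝕜 := 𝕜) A = rankOne 𝕜 x y) :
    A.rank = 1 := by
  rw [rank_eq_finrank_range_toLin A (EuclideanSpace.basisFun n 𝕜).toBasis
    (EuclideanSpace.basisFun n 𝕜).toBasis, ← toEuclideanLin_eq_toLin_orthonormal,
    ← coe_toEuclideanCLM_eq_toEuclideanLin, hA, ← rank_eq_one_iff_finrank_eq_one]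
  exact rank_rankOne hx hy

theorem isJordanFrame_of_toEuclideanCLM_eq_rankOne {c : ι → Matrix n n 𝕜}
    {ξ η : ι → EuclideanSpace 𝕜 n} (hξ : Orthonormal 𝕜 ξ) (hη : Orthonormal 𝕜 η)
    (hc : ∀ i, toEuclideanCLM (𝕜 := 𝕜) (c i) = rankOne 𝕜 (η i) (ξ i)) : IsJordanFrame c := by
  have he := EquivLike.injective (toEuclideanCLM (n := n) (𝕜 := 𝕜))
  refine ⟨fun i => he ?_, fun i => rank_eq_one_of_toEuclideanCLM_eq_rankOne (hη.ne_zero i)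
    (hξ.ne_zero i) (hc i), fun i j hij => ⟨he ?_, he ?_⟩⟩ <;>
  simp only [← star_eq_conjTranspose, map_mul, map_star, map_zero, star_eq_adjoint, hc]
  · exact rankOne_mul_adjoint_mul_rankOne_self (hη.norm_eq_one i) (hξ.norm_eq_one i)
  · exact rankOne_mul_adjoint_rankOne_eq_zero (hξ.inner_eq_zero hij)
  · exact adjoint_rankOne_mul_rankOne_eq_zero (hη.inner_eq_zero hij)

end Matrix

/-- Theorem III.5 (final assertion) for `V = Mᵣ(ℂ)`: the images of the standard
basis vectors under a linear isometry from `(Fin r → ℂ, sup)` into `(Mᵣ(ℂ), op)`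
form a Jordan frame: rank-one (primitive) tripotents which are mutually orthogonal. -/
theorem stmt7 (r : ℕ) (ℓ : (Fin r → ℂ) →ₗ[ℂ] Matrix (Fin r) (Fin r) ℂ)
    (hiso : ∀ x : Fin r → ℂ, ‖ℓ x‖ = ‖x‖)
    (c : Fin r → Matrix (Fin r) (Fin r) ℂ)
    (hc : ∀ i, c i = ℓ (Pi.single i 1)) :
    (∀ i, c i * (c i)ᴴ * c i = c i) ∧
    (∀ i, (c i).rank = 1) ∧
    (∀ i j, i ≠ j → c i * (c j)ᴴ = 0 ∧ (c i)ᴴ * c j = 0) := by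
  set T := fun i => toEuclideanCLM (𝕜 := ℂ) (c i)
  have hT : ∀ i, ‖T i‖ = 1 := fun i => by
    simp [T, ← cstar_norm_def, hc, hiso, Pi.norm_single]
  have hT_pm : Pairwise fun i j => ‖T i + T j‖ ≤ 1 ∧ ‖T i - T j‖ ≤ 1 := fun i j hij => by
    simp only [T, ← map_add, ← map_sub, ← cstar_norm_def, hc, hiso]
    rw [sub_eq_add_neg, ← Pi.single_neg]
    exact ⟨(Pi.norm_single_add_single_le hij 1 1).trans (by simp),
      (Pi.norm_single_add_single_le hij 1 (-1)).trans (by simp)⟩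
  obtain ⟨ξ, η, hξ, hη, hTξη⟩ :=
    exists_orthonormal_eq_rankOne_of_pairwise_norm_add_le (by simp) hT hT_pm
  exact isJordanFrame_of_toEuclideanCLM_eq_rankOne hξ hη hTξη
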